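/- For f ∈ ℓ^p_A, the co-projection J = f − f̂ (metric co-projection of f with respect to [Sf]) vanishes at every zero of f in D, with at least the same multiplicity. -/

import Mathlib

/-- The `ℓ^p` norm of a coefficient sequence. -/
noncomputable def pnorm (p : ℝ) (a : ℕ → ℂ) : ℝ := (∑' k, ‖a k‖ ^ p) ^ (1/p)

/-- Membership in `ℓ^p_A`, via the coefficient sequence. -/
def Memlp (p : ℝ) (a : ℕ → ℂ) : Prop := Summable fun k => ‖a k‖ ^ p

/-- Coefficients of `S^n f`, where `S` is the shift `(Sf)(z) = z f(z)`. -/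
def shiftn (n : ℕ) (a : ℕ → ℂ) : ℕ → ℂ := fun m => if m < n then 0 else a (m - n)

/-- Birkhoff-James orthogonality `a ⊥_p b` in `ℓ^p_A`. -/
def orth (p : ℝ) (a b : ℕ → ℂ) : Prop :=
  ∀ β : ℂ, pnorm p a ≤ pnorm p fun k => a k + β * b k

/-- `g` belongs to `[Sf]`, the closed span of `{S^k f : k ≥ 1}` in `ℓ^p_A`. -/
def inSpanSf (p : ℝ) (f g : ℕ → ℂ) : Prop :=
  ∀ ε > 0, ∃ (N : ℕ) (c : ℕ → ℂ),
    pnorm p (fun m => g m - ∑ k ∈ Finset.range N, c k * shiftn (k + 1) f m) < ε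

open Filter Topology Metric Set

/-! ### Auxiliary lemmas -/

lemma pnorm_nonneg (p : ℝ) (a : ℕ → ℂ) : 0 ≤ pnorm p a :=
  Real.rpow_nonneg (tsum_nonneg fun k => Real.rpow_nonneg (norm_nonneg _) _) _

lemma coeff_le_pnorm {p : ℝ} (hp : 0 < p) {a : ℕ → ℂ} (ha : Memlp p a) (k : ℕ) :
    ‖a k‖ ≤ pnorm p a := by
  have h0 : ∀ j, 0 ≤ ‖a j‖ ^ p := fun j => Real.rpow_nonneg (norm_nonneg _) _
  have h1 : ‖a k‖ ^ p ≤ ∑' j, ‖a j‖ ^ p := Summable.le_tsum ha k fun j _ => h0 j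
  have h2 : (‖a k‖ ^ p) ^ (1/p) ≤ (∑' j, ‖a j‖ ^ p) ^ (1/p) :=
    Real.rpow_le_rpow (h0 k) h1 (by positivity)
  rw [one_div, Real.rpow_rpow_inv (norm_nonneg _) hp.ne'] at h2
  rw [pnorm, one_div]
  exact h2

lemma summable_coeff {p : ℝ} (hp : 0 < p) {a : ℕ → ℂ} (ha : Memlp p a) {z : ℂ}
    (hz : ‖z‖ < 1) : Summable fun k => a k * z ^ k := by
  refine Summable.of_norm (Summable.of_nonneg_of_le (fun k => norm_nonneg _) (fun k => ?_)
    ((summable_geometric_of_lt_one (norm_nonneg z) hz).mul_left (pnorm p a)))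
  rw [norm_mul, norm_pow]
  exact mul_le_mul_of_nonneg_right (coeff_le_pnorm hp ha k) (by positivity)

lemma F_bound {p : ℝ} (hp : 0 < p) {a : ℕ → ℂ} (ha : Memlp p a) {r : ℝ} (hr0 : 0 ≤ r)
    (hr1 : r < 1) {z : ℂ} (hz : ‖z‖ ≤ r) :
    ‖∑' k, a k * z ^ k‖ ≤ pnorm p a * (1 - r)⁻¹ := by
  have hz1 : ‖z‖ < 1 := lt_of_le_of_lt hz hr1
  have hsn : Summable fun k => ‖a k * z ^ k‖ := (summable_coeff hp ha hz1).norm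
  have hbd : ∀ k, ‖a k * z ^ k‖ ≤ pnorm p a * r ^ k := by
    intro k
    rw [norm_mul, norm_pow]
    exact mul_le_mul (coeff_le_pnorm hp ha k) (pow_le_pow_left₀ (norm_nonneg z) hz k)
      (by positivity) (pnorm_nonneg p a)
  calc ‖∑' k, a k * z ^ k‖ ≤ ∑' k, ‖a k * z ^ k‖ := norm_tsum_le_tsum_norm hsn
    _ ≤ ∑' k, pnorm p a * r ^ k :=
        Summable.tsum_le_tsum hbd hsn ((summable_geometric_of_lt_one hr0 hr1).mul_left _)
    _ = pnorm p a * (1 - r)⁻¹ := by rw [tsum_mul_left, tsum_geometric_of_lt_one hr0 hr1]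

lemma memlp_iff_memℓp {p : ℝ} (hp : 0 < p) {a : ℕ → ℂ} :
    Memlp p a ↔ Memℓp a (ENNReal.ofReal p) := by
  have ht : (ENNReal.ofReal p).toReal = p := ENNReal.toReal_ofReal hp.le
  constructor
  · intro h
    exact memℓp_gen (by rw [ht]; exact h)
  · intro h
    have := (memℓp_gen_iff (by rw [ht]; exact hp)).mp h
    rwa [ht] at this

lemma memlp_shiftn {p : ℝ} (hp : 0 < p) {f : ℕ → ℂ} (hf : Memlp p f) (n : ℕ) :
    Memlp p (shiftn n f) := by
  have hinj : Function.Injective (fun m : ℕ => m + n) := add_left_injective n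
  have h0 : ∀ x ∉ Set.range (fun m : ℕ => m + n), ‖shiftn n f x‖ ^ p = 0 := by
    intro x hx
    have hxn : x < n := by
      by_contra h
      exact hx ⟨x - n, show x - n + n = x by omega⟩
    simp [shiftn, hxn, Real.zero_rpow hp.ne']
  refine (hinj.summable_iff h0).mp ?_
  have hcomp : ((fun x => ‖shiftn n f x‖ ^ p) ∘ fun m => m + n) = fun m => ‖f m‖ ^ p := by
    funext m
    simp only [Function.comp, shiftn]
    rw [if_neg (by omega), Nat.add_sub_cancel]
  rw [hcomp]
  exact hf

lemma memlp_zero_fun {p : ℝ} (hp : 0 < p) : Memlp p (fun _ => 0) := by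
  simpa [Memlp, Real.zero_rpow hp.ne'] using summable_zero

lemma memlp_combo {p : ℝ} (hp : 0 < p) {f : ℕ → ℂ} (hf : Memlp p f) (N : ℕ) (c : ℕ → ℂ) :
    Memlp p (fun m => ∑ k ∈ Finset.range N, c k * shiftn (k + 1) f m) := by
  induction N with
  | zero => simpa using memlp_zero_fun hp
  | succ n ih =>
    rw [memlp_iff_memℓp hp]
    have heq : (fun m => ∑ k ∈ Finset.range (n+1), c k * shiftn (k + 1) f m)
        = (fun m => ∑ k ∈ Finset.range n, c k * shiftn (k + 1) f m)
          + fun m => c n * shiftn (n + 1) f m := by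
      funext m
      simp [Finset.sum_range_succ]
    rw [heq]
    exact Memℓp.add ((memlp_iff_memℓp hp).mp ih)
      (((memlp_iff_memℓp hp).mp (memlp_shiftn hp hf (n+1))).const_mul (c n))

lemma memlp_sub {p : ℝ} (hp : 0 < p) {a b : ℕ → ℂ} (ha : Memlp p a) (hb : Memlp p b) :
    Memlp p (fun m => a m - b m) := by
  rw [memlp_iff_memℓp hp]
  exact Memℓp.sub ((memlp_iff_memℓp hp).mp ha) ((memlp_iff_memℓp hp).mp hb)

lemma tsum_shiftn {p : ℝ} (hp : 0 < p) {f : ℕ → ℂ} (hf : Memlp p f) {z : ℂ} (hz : ‖z‖ < 1)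
    (n : ℕ) : HasSum (fun m => shiftn n f m * z ^ m) (z ^ n * ∑' k, f k * z ^ k) := by
  have hs := summable_coeff hp hf hz
  have h1 : HasSum (fun k => z ^ n * (f k * z ^ k)) (z ^ n * ∑' k, f k * z ^ k) :=
    hs.hasSum.mul_left _
  have hinj : Function.Injective (fun m : ℕ => m + n) := add_left_injective n
  have h0 : ∀ x ∉ Set.range (fun m : ℕ => m + n), shiftn n f x * z ^ x = 0 := by
    intro x hx
    have hxn : x < n := by
      by_contra h
      exact hx ⟨x - n, show x - n + n = x by omega⟩
    simp [shiftn, hxn]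
  refine (hinj.hasSum_iff h0).mp ?_
  have hcomp : ((fun m => shiftn n f m * z ^ m) ∘ fun k => k + n)
      = fun k => z ^ n * (f k * z ^ k) := by
    funext k
    simp only [Function.comp, shiftn]
    rw [if_neg (by omega), Nat.add_sub_cancel, pow_add]
    ring
  rw [hcomp]
  exact h1

lemma tsum_combo {p : ℝ} (hp : 0 < p) {f : ℕ → ℂ} (hf : Memlp p f) {z : ℂ} (hz : ‖z‖ < 1)
    (N : ℕ) (c : ℕ → ℂ) :
    ∑' m, (∑ k ∈ Finset.range N, c k * shiftn (k + 1) f m) * z ^ m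
      = ∑ k ∈ Finset.range N, c k * (z ^ (k+1) * ∑' j, f j * z ^ j) := by
  have hsum : ∀ k ∈ Finset.range N, Summable (fun m => c k * (shiftn (k+1) f m * z ^ m)) :=
    fun k _ => ((tsum_shiftn hp hf hz (k+1)).summable).mul_left (c k)
  have h1 : (fun m => (∑ k ∈ Finset.range N, c k * shiftn (k + 1) f m) * z ^ m)
      = fun m => ∑ k ∈ Finset.range N, c k * (shiftn (k + 1) f m * z ^ m) := by
    funext m
    rw [Finset.sum_mul]
    exact Finset.sum_congr rfl fun k _ => by ring
  rw [h1, Summable.tsum_finsetSum hsum]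
  refine Finset.sum_congr rfl fun k _ => ?_
  rw [tsum_mul_left, (tsum_shiftn hp hf hz (k+1)).tsum_eq]

lemma itdw_eq_itd {n : ℕ} {g : ℂ → ℂ} {s : Set ℂ} (hs : IsOpen s) {x : ℂ} (hx : x ∈ s) :
    iteratedDerivWithin n g s x = iteratedDeriv n g x := by
  rw [iteratedDerivWithin_eq_iteratedFDerivWithin, iteratedDeriv_eq_iteratedFDeriv,
    iteratedFDerivWithin_of_isOpen n hs hx]

lemma analytic_iter_deriv {g : ℂ → ℂ} {s : Set ℂ} (hg : AnalyticOnNhd ℂ g s) (j : ℕ) :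
    AnalyticOnNhd ℂ (deriv^[j] g) s := by
  induction j with
  | zero => exact hg
  | succ j ih =>
    rw [Function.iterate_succ_apply']
    exact ih.deriv

lemma vanish_mul {U : Set ℂ} (hU : IsOpen U) {w : ℂ} (hw : w ∈ U) :
    ∀ m : ℕ, ∀ G h : ℂ → ℂ, AnalyticOnNhd ℂ G U → AnalyticOnNhd ℂ h U →
      (∀ j < m, iteratedDerivWithin j G U w = 0) →
      ∀ j < m, iteratedDerivWithin j (fun z => h z * G z) U w = 0 := by
  have hUniq : UniqueDiffOn ℂ U := hU.uniqueDiffOn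
  intro m
  induction m with
  | zero => intro G h _ _ _ j hj; omega
  | succ m ih =>
    intro G h hG hh hvan j hj
    cases j with
    | zero =>
      have h0 := hvan 0 (by omega)
      simp only [iteratedDerivWithin_zero] at h0 ⊢
      rw [h0, mul_zero]
    | succ jj =>
      rw [iteratedDerivWithin_succ']
      have hGd : AnalyticOnNhd ℂ (deriv G) U := hG.deriv
      have hhd : AnalyticOnNhd ℂ (deriv h) U := hh.deriv
      have heq : Set.EqOn (derivWithin (fun z => h z * G z) U)
          ((fun z => deriv h z * G z) + fun z => h z * deriv G z) U := by
        intro z hz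
        rw [derivWithin_of_isOpen hU hz]
        exact deriv_mul ((hh z hz).differentiableAt) ((hG z hz).differentiableAt)
      rw [iteratedDerivWithin_congr heq hw]
      rw [iteratedDerivWithin_add hw hUniq ((hhd.mul hG).contDiffOn hUniq w hw)
        ((hh.mul hGd).contDiffOn hUniq w hw)]
      have hvan' : ∀ i < m, iteratedDerivWithin i (deriv G) U w = 0 := by
        intro i hi
        have heq2 : Set.EqOn (deriv G) (derivWithin G U) U :=
          fun z hz => (derivWithin_of_isOpen hU hz).symm
        rw [iteratedDerivWithin_congr heq2 hw, ← iteratedDerivWithin_succ']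
        exact hvan (i+1) (by omega)
      have t1 := ih G (deriv h) hG hhd (fun i hi => hvan i (by omega)) jj (by omega)
      have t2 := ih (deriv G) h hGd hh hvan' jj (by omega)
      rw [t1, t2, add_zero]

lemma itdw_sum {U : Set ℂ} (hU : IsOpen U) {w : ℂ} (hw : w ∈ U) {s : Finset ℕ}
    {fn : ℕ → ℂ → ℂ} (h : ∀ k ∈ s, AnalyticOnNhd ℂ (fn k) U) (j : ℕ) :
    iteratedDerivWithin j (fun z => ∑ k ∈ s, fn k z) U w
      = ∑ k ∈ s, iteratedDerivWithin j (fn k) U w := by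
  classical
  have hUniq : UniqueDiffOn ℂ U := hU.uniqueDiffOn
  induction s using Finset.induction with
  | empty =>
    simp only [Finset.sum_empty]
    have hz : (fun _ : ℂ => (0:ℂ)) = (0:ℂ) • (fun _ : ℂ => (0:ℂ)) := by funext z; simp
    rw [hz, iteratedDerivWithin_const_smul hw hUniq (0:ℂ) contDiffWithinAt_const, zero_smul]
  | @insert a s' hk ih =>
    have heq : (fun z => ∑ k ∈ insert a s', fn k z)
        = fn a + fun z => ∑ k ∈ s', fn k z := by
      funext z
      simp [Finset.sum_insert hk]
    rw [heq, iteratedDerivWithin_add hw hUniq (g := fun z => ∑ k ∈ s', fn k z)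
      ((h a (Finset.mem_insert_self a s')).contDiffOn hUniq w hw)
      ((Finset.analyticOnNhd_fun_sum s' fun k hks => h k (Finset.mem_insert_of_mem hks)).contDiffOn
        hUniq w hw),
      ih fun k hks => h k (Finset.mem_insert_of_mem hks), Finset.sum_insert hk]

theorem coprojection_keeps_zeros (p : ℝ) (hp : 1 < p)
    (f : ℕ → ℂ) (hf : Memlp p f)
    (fhat : ℕ → ℂ) (hfhatmem : Memlp p fhat) (hfhatSpan : inSpanSf p f fhat)
    (hfhatMin : ∀ g : ℕ → ℂ, Memlp p g → inSpanSf p f g →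
      pnorm p (fun k => f k - fhat k) ≤ pnorm p (fun k => f k - g k))
    (w : ℂ) (hw : ‖w‖ < 1) (m : ℕ)
    (hzero : ∀ j < m, iteratedDeriv j (fun z => ∑' k, f k * z ^ k) w = 0) :
    ∀ j < m, iteratedDeriv j (fun z => ∑' k, (f k - fhat k) * z ^ k) w = 0 := by
  have hp0 : 0 < p := lt_trans one_pos hp
  set r : ℝ := (1 + ‖w‖) / 2 with hr_def
  have hr1 : r < 1 := by rw [hr_def]; linarith
  have hrw : ‖w‖ < r := by rw [hr_def]; linarith [norm_nonneg w]
  have hr0 : 0 ≤ r := le_of_lt (lt_of_le_of_lt (norm_nonneg w) hrw)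
  set U : Set ℂ := Metric.ball (0:ℂ) r with hU_def
  have hU : IsOpen U := Metric.isOpen_ball
  have hUniq : UniqueDiffOn ℂ U := hU.uniqueDiffOn
  have hwU : w ∈ U := Metric.mem_ball.mpr (by rwa [dist_zero_right])
  have hmem_norm : ∀ z ∈ U, ‖z‖ < r := by
    intro z hz
    have := Metric.mem_ball.mp hz
    rwa [dist_zero_right] at this
  have hmem1 : ∀ z ∈ U, ‖z‖ < 1 := fun z hz => lt_trans (hmem_norm z hz) hr1
  -- the series functions
  set Fs : (ℕ → ℂ) → ℂ → ℂ := fun a z => ∑' k, a k * z ^ k with hFs_def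
  -- differentiability / analyticity of such series
  have hdiff : ∀ a : ℕ → ℂ, Memlp p a → DifferentiableOn ℂ (Fs a) U := by
    intro a ha
    refine Complex.differentiableOn_tsum_of_summable_norm
      (u := fun k => pnorm p a * r ^ k)
      ((summable_geometric_of_lt_one hr0 hr1).mul_left _)
      (fun k => ((differentiableOn_id.pow k).const_mul _)) hU ?_
    intro k z hz
    rw [norm_mul, norm_pow]
    exact mul_le_mul (coeff_le_pnorm hp0 ha k)
      (pow_le_pow_left₀ (norm_nonneg z) (le_of_lt (hmem_norm z hz)) k)
      (by positivity) (pnorm_nonneg p a)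
  have hFfA : AnalyticOnNhd ℂ (Fs f) U := (hdiff f hf).analyticOnNhd hU
  -- vanishing of f's series within U
  have hzeroW : ∀ j < m, iteratedDerivWithin j (Fs f) U w = 0 := by
    intro j hj
    rw [itdw_eq_itd hU hwU]
    exact hzero j hj
  -- choose the approximating sequence
  have hchoice : ∀ n : ℕ, ∃ (N : ℕ) (c : ℕ → ℂ),
      pnorm p (fun m' => fhat m' - ∑ k ∈ Finset.range N, c k * shiftn (k + 1) f m')
        < 1 / ((n : ℝ) + 1) :=
    fun n => hfhatSpan (1 / ((n : ℝ) + 1)) (by positivity)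
  choose N c hNc using hchoice
  set g : ℕ → ℕ → ℂ := fun n m' => ∑ k ∈ Finset.range (N n), c n k * shiftn (k + 1) f m'
    with hg_def
  have hgmem : ∀ n, Memlp p (g n) := fun n => memlp_combo hp0 hf (N n) (c n)
  have hdmem : ∀ n, Memlp p (fun m' => fhat m' - g n m') :=
    fun n => memlp_sub hp0 hfhatmem (hgmem n)
  -- pointwise: Fs fhat - Fs (g n) = Fs (fhat - g n)
  have hptsub : ∀ n, ∀ z ∈ U, Fs fhat z - Fs (g n) z = Fs (fun m' => fhat m' - g n m') z := by
    intro n z hz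
    have h1 : (fun k => (fhat k - g n k) * z ^ k)
        = fun k => fhat k * z ^ k - g n k * z ^ k := by
      funext k; ring
    rw [hFs_def]
    simp only
    rw [h1, Summable.tsum_sub (summable_coeff hp0 hfhatmem (hmem1 z hz))
      (summable_coeff hp0 (hgmem n) (hmem1 z hz))]
  -- uniform convergence on U
  have hTU : TendstoUniformlyOn (fun n => Fs (g n)) (Fs fhat) atTop U := by
    rw [Metric.tendstoUniformlyOn_iff]
    intro ε hε
    have hlim : Tendsto (fun n : ℕ => (1 / ((n:ℝ)+1)) * (1 - r)⁻¹) atTop (𝓝 (0 * (1 - r)⁻¹)) :=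
      tendsto_one_div_add_atTop_nhds_zero_nat.mul_const _
    rw [zero_mul] at hlim
    filter_upwards [hlim.eventually_lt_const hε] with n hn z hz
    rw [dist_eq_norm, hptsub n z hz]
    calc ‖Fs (fun m' => fhat m' - g n m') z‖
        ≤ pnorm p (fun m' => fhat m' - g n m') * (1 - r)⁻¹ :=
          F_bound hp0 (hdmem n) hr0 hr1 (le_of_lt (hmem_norm z hz))
      _ < (1 / ((n:ℝ)+1)) * (1 - r)⁻¹ :=
          mul_lt_mul_of_pos_right (hNc n) (by rw [inv_pos]; linarith)
      _ < ε := hn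
  -- analyticity of the approximants
  have hgA : ∀ n, AnalyticOnNhd ℂ (Fs (g n)) U := fun n => ((hdiff _ (hgmem n)).analyticOnNhd hU)
  -- iterated derivative convergence
  have key : ∀ j : ℕ, TendstoLocallyUniformlyOn (fun n => deriv^[j] (Fs (g n)))
      (deriv^[j] (Fs fhat)) atTop U := by
    intro j
    induction j with
    | zero => simpa using hTU.tendstoLocallyUniformlyOn
    | succ j ih =>
      have hd : ∀ᶠ n in atTop, DifferentiableOn ℂ (deriv^[j] (Fs (g n))) U :=
        Eventually.of_forall fun n =>
          (analytic_iter_deriv (hgA n) j).differentiableOn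
      have := ih.deriv hd hU
      simpa [Function.comp_def, ← Function.iterate_succ_apply'] using this
  -- vanishing of approximants at w
  have happrox0 : ∀ n, ∀ j < m, iteratedDerivWithin j (Fs (g n)) U w = 0 := by
    intro n j hj
    have heqn : Set.EqOn (Fs (g n))
        (fun z => ∑ k ∈ Finset.range (N n), c n k * (z ^ (k+1) * Fs f z)) U := by
      intro z hz
      exact tsum_combo hp0 hf (hmem1 z hz) (N n) (c n)
    rw [iteratedDerivWithin_congr heqn hwU]
    have hterm : ∀ k ∈ Finset.range (N n),
        AnalyticOnNhd ℂ (fun z : ℂ => c n k * (z ^ (k+1) * Fs f z)) U := by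
      intro k _
      exact (analyticOnNhd_const).mul (((analyticOnNhd_id).pow (k+1)).mul hFfA)
    rw [itdw_sum hU hwU hterm j]
    refine Finset.sum_eq_zero fun k hk => ?_
    rw [iteratedDerivWithin_const_mul hwU hUniq (c n k) (f := fun z => z ^ (k+1) * Fs f z)
      ((((analyticOnNhd_id).pow (k+1)).mul hFfA).contDiffOn hUniq w hwU)]
    rw [vanish_mul hU hwU m (Fs f) (fun z => z ^ (k+1)) hFfA ((analyticOnNhd_id).pow (k+1))
      hzeroW j hj, mul_zero]
  -- vanishing of fhat's series at w
  have hfhat0 : ∀ j < m, iteratedDeriv j (Fs fhat) w = 0 := by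
    intro j hj
    have htend := (key j).tendsto_at hwU
    have hzseq : (fun n => deriv^[j] (Fs (g n)) w) = fun _ => (0:ℂ) := by
      funext n
      rw [← iteratedDeriv_eq_iterate, ← itdw_eq_itd hU hwU]
      exact happrox0 n j hj
    rw [hzseq] at htend
    rw [iteratedDeriv_eq_iterate]
    exact (tendsto_nhds_unique tendsto_const_nhds htend).symm
  -- conclusion
  intro j hj
  have hE : (fun z : ℂ => ∑' k, (f k - fhat k) * z ^ k)
      =ᶠ[𝓝 w] fun z => Fs f z - Fs fhat z := by
    filter_upwards [Metric.isOpen_ball.mem_nhds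
      (show w ∈ Metric.ball (0:ℂ) 1 from Metric.mem_ball.mpr (by rwa [dist_zero_right]))]
      with z hz
    have hz1 : ‖z‖ < 1 := by
      have := Metric.mem_ball.mp hz
      rwa [dist_zero_right] at this
    have h1 : (fun k => (f k - fhat k) * z ^ k) = fun k => f k * z ^ k - fhat k * z ^ k := by
      funext k; ring
    rw [h1, Summable.tsum_sub (summable_coeff hp0 hf hz1) (summable_coeff hp0 hfhatmem hz1)]
  rw [hE.iteratedDeriv_eq j, ← itdw_eq_itd hU hwU]
  have hsub : (fun z => Fs f z - Fs fhat z) = Fs f - Fs fhat := rfl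
  rw [hsub, iteratedDerivWithin_sub hwU hUniq (hFfA.contDiffOn hUniq w hwU)
    (((hdiff fhat hfhatmem).analyticOnNhd hU).contDiffOn hUniq w hwU),
    itdw_eq_itd hU hwU, itdw_eq_itd hU hwU, hzero j hj, hfhat0 j hj, sub_zero]
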